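/- arXiv:1306.1315 — 3 statements merged into one kernel-verified Lean document; each statement's English description precedes it below -/
import Mathlib

section
/- For any positive semi-definite n×n matrices A₁, A₂, A₃ with A₃ invertible, D(A₁,A₃[n−1]) · D(A₂,A₃[n−1]) − ((n−1)/n) · D(A₁,A₂,A₃[n−2]) · det(A₃) = det(A₃)² · tr(A₃⁻¹A₁A₃⁻¹A₂)/n², and in particular the left-hand side is non-negative. -/
/-!
Left multiplication of every argument by `B` multiplies the mixed discriminant by `det B`, so
with `B = A₃` everything reduces to mixed discriminants of `X = A₃⁻¹A₁`, `Y = A₃⁻¹A₂` and copies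
of the identity. In the permutation sum defining these, each term is the determinant of the
identity with one or two columns replaced, which gives `D(X, 1, …) = tr X / n` and
`D(X, Y, 1, …) = (tr X tr Y − tr XY) / (n(n−1))`. The identity is then a rational computation,
and `tr(A₃⁻¹A₁A₃⁻¹A₂) ≥ 0` because it is the trace of a product of two positive semidefinite
matrices.
-/

/-- The mixed discriminant. -/
noncomputable def mixedDisc {n : ℕ} (A : Fin n → Matrix (Fin n) (Fin n) ℝ) : ℝ :=
  (1 / (Nat.factorial n : ℝ)) *
    ∑ σ : Equiv.Perm (Fin n), Matrix.det (Matrix.of fun i j => A (σ j) i j)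

open Matrix Equiv Finset
open scoped Nat

namespace Equiv.Perm

variable {M : Type*} [AddCommMonoid M]

theorem sum_comp_apply_zero {n : ℕ} (f : Fin (n + 1) → M) :
    ∑ σ : Perm (Fin (n + 1)), f (σ 0) = n ! • ∑ p, f p := by
  rw [← decomposeFin.symm.sum_comp, Fintype.sum_prod_type]
  simp [Finset.sum_const, Fintype.card_perm, Finset.smul_sum]

theorem sum_comp_apply_zero_one {n : ℕ} (g : Fin (n + 2) → Fin (n + 2) → M) :
    ∑ σ : Perm (Fin (n + 2)), g (σ 0) (σ 1) = n ! • ∑ p, ∑ q ∈ univ.erase p, g p q := by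
  rw [← decomposeFin.symm.sum_comp, Fintype.sum_prod_type, Finset.smul_sum]
  refine Fintype.sum_congr _ _ fun p => ?_
  -- `decomposeFin.symm (p, τ)` sends `0 ↦ p` and `1 ↦ swap 0 p (τ 0).succ`
  simp only [decomposeFin_symm_apply_zero, decomposeFin_symm_apply_one]
  rw [sum_comp_apply_zero (fun q => g p (swap 0 p q.succ))]
  congr 1
  refine Finset.sum_bij (fun (q : Fin (n + 1)) _ => swap 0 p q.succ) (fun q _ => ?_)
    (fun _ _ _ _ => by simp) (fun b hb => ?_) (fun _ _ => rfl)
  · simp [swap_apply_eq_iff, Fin.succ_ne_zero]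
  · obtain ⟨r, hr⟩ := Fin.exists_succ_eq.mpr
      (show swap 0 p b ≠ 0 by simpa [swap_apply_eq_iff] using hb)
    exact ⟨r, mem_univ r, by simp [hr]⟩

end Equiv.Perm

namespace Matrix

variable {ι R : Type*} [Fintype ι] [DecidableEq ι] [CommRing R]

theorem det_one_updateCol (p : ι) (x : ι → R) :
    ((1 : Matrix ι ι R).updateCol p x).det = x p := by
  rw [← cramer_apply, cramer_one]
  rfl

theorem det_one_updateCol_updateCol {p q : ι} (hpq : p ≠ q) (x y : ι → R) :
    (((1 : Matrix ι ι R).updateCol p x).updateCol q y).det = x p * y q - x q * y p := by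
  let U : Matrix ι (Fin 2) R := (of ![x - Pi.single p 1, y - Pi.single q 1])ᵀ
  let V : Matrix (Fin 2) ι R := of ![Pi.single p 1, Pi.single q 1]
  have hUV : ((1 : Matrix ι ι R).updateCol p x).updateCol q y = 1 + U * V := by
    ext i j
    rcases eq_or_ne j q with rfl | hjq
    · simp [U, V, mul_apply, Fin.sum_univ_two, one_apply, Pi.single_apply, hpq]
    rcases eq_or_ne j p with rfl | hjp
    · simp [U, V, mul_apply, Fin.sum_univ_two, one_apply, Pi.single_apply, hjq]
    · simp [U, V, mul_apply, Fin.sum_univ_two, one_apply, Pi.single_apply, hjq, hjp]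
  -- Weinstein–Aronszajn turns this into the determinant of the `2 × 2` matrix `1 + V * U`
  rw [hUV, det_one_add_mul_comm, det_fin_two]
  simp [U, V, hpq, hpq.symm]
  ring

theorem PosSemidef.trace_mul_nonneg {P Q : Matrix ι ι ℝ} (hP : P.PosSemidef)
    (hQ : Q.PosSemidef) : 0 ≤ (P * Q).trace := by
  open scoped MatrixOrder in
  obtain ⟨C, rfl⟩ := CStarAlgebra.nonneg_iff_eq_star_mul_self.mp hQ.nonneg
  rw [star_eq_conjTranspose, ← Matrix.mul_assoc, trace_mul_comm]
  simpa [Matrix.mul_assoc] using (hP.mul_mul_conjTranspose_same C).trace_nonneg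

end Matrix

theorem mixedDisc_mul_left {m : ℕ} (B : Matrix (Fin m) (Fin m) ℝ)
    (A : Fin m → Matrix (Fin m) (Fin m) ℝ) :
    mixedDisc (fun k => B * A k) = B.det * mixedDisc A := by
  have hterm : ∀ σ : Perm (Fin m),
      (of fun i j => (B * A (σ j)) i j) = B * of fun i j => A (σ j) i j := by
    intro σ
    ext i j
    simp [mul_apply]
  simp only [mixedDisc, hterm, det_mul, ← mul_sum]
  ring

theorem mixedDisc_ite_one {m : ℕ} (X : Matrix (Fin (m + 1)) (Fin (m + 1)) ℝ) :
    mixedDisc (fun k => if k = 0 then X else 1) = X.trace / (m + 1) := by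
  have hterm : ∀ σ : Perm (Fin (m + 1)), (of fun i j => (if σ j = 0 then X else 1) i j) =
      (1 : Matrix _ _ ℝ).updateCol (σ⁻¹ 0) fun i => X i (σ⁻¹ 0) := by
    intro σ
    ext i j
    rcases eq_or_ne j (σ⁻¹ 0) with rfl | hj
    · simp
    · rw [updateCol_ne hj]
      simp [Perm.eq_inv_iff_eq.not.mp hj]
  simp only [mixedDisc, hterm, det_one_updateCol]
  rw [← Equiv.sum_comp (Equiv.inv _)]
  simp only [Equiv.inv_apply, inv_inv]
  rw [Perm.sum_comp_apply_zero (fun p => X p p), Nat.factorial_succ]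
  simp only [nsmul_eq_mul, trace, diag_apply]
  push_cast
  field_simp

theorem mixedDisc_ite_ite_one {m : ℕ} (X Y : Matrix (Fin (m + 2)) (Fin (m + 2)) ℝ) :
    mixedDisc (fun k => if k = 0 then X else if k = 1 then Y else 1) =
      (X.trace * Y.trace - (X * Y).trace) / ((m + 2) * (m + 1)) := by
  have hterm : ∀ σ : Perm (Fin (m + 2)),
      (of fun i j => (if σ j = 0 then X else if σ j = 1 then Y else 1) i j) =
        ((1 : Matrix _ _ ℝ).updateCol (σ⁻¹ 0) fun i => X i (σ⁻¹ 0)).updateCol (σ⁻¹ 1)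
          fun i => Y i (σ⁻¹ 1) := by
    intro σ
    ext i j
    rcases eq_or_ne j (σ⁻¹ 1) with rfl | hj1
    · simp
    rcases eq_or_ne j (σ⁻¹ 0) with rfl | hj0
    · simp
    · rw [updateCol_ne hj1, updateCol_ne hj0]
      simp [Perm.eq_inv_iff_eq.not.mp hj0, Perm.eq_inv_iff_eq.not.mp hj1]
  have hne : ∀ σ : Perm (Fin (m + 2)), σ⁻¹ 0 ≠ σ⁻¹ 1 := fun σ => by simp
  simp only [mixedDisc, hterm, det_one_updateCol_updateCol (hne _)]
  rw [← Equiv.sum_comp (Equiv.inv _)]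
  simp only [Equiv.inv_apply, inv_inv]
  set F : Fin (m + 2) → Fin (m + 2) → ℝ := fun p q => X p p * Y q q - X q p * Y p q
  have hsum : ∑ p, ∑ q ∈ univ.erase p, F p q = X.trace * Y.trace - (X * Y).trace := by
    have hdiag : ∀ p, ∑ q ∈ univ.erase p, F p q = ∑ q, F p q :=
      fun p => sum_erase univ (sub_self (X p p * Y p p))
    simp only [hdiag, F, sum_sub_distrib, trace, diag_apply, mul_apply, sum_mul_sum]
    rw [Finset.sum_comm (f := fun p q => X q p * Y p q)]
  rw [Perm.sum_comp_apply_zero_one F, hsum, Nat.factorial_succ, Nat.factorial_succ]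
  simp only [nsmul_eq_mul]
  push_cast
  field_simp
  ring

theorem mixedDisc_ite {m : ℕ} (A B : Matrix (Fin (m + 1)) (Fin (m + 1)) ℝ)
    (hB : IsUnit B.det) :
    mixedDisc (fun k => if k = 0 then A else B) = B.det * (B⁻¹ * A).trace / (m + 1) := by
  have h : (fun k : Fin (m + 1) => if k = 0 then A else B) =
      fun k => B * if k = 0 then B⁻¹ * A else 1 := by
    funext k
    split_ifs <;> simp [mul_nonsing_inv_cancel_left _ _ hB]
  rw [h, mixedDisc_mul_left, mixedDisc_ite_one, mul_div_assoc]

theorem mixedDisc_ite_ite {m : ℕ} (A₁ A₂ B : Matrix (Fin (m + 2)) (Fin (m + 2)) ℝ)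
    (hB : IsUnit B.det) :
    mixedDisc (fun k => if k = 0 then A₁ else if k = 1 then A₂ else B) =
      B.det * ((B⁻¹ * A₁).trace * (B⁻¹ * A₂).trace - (B⁻¹ * A₁ * (B⁻¹ * A₂)).trace) /
        ((m + 2) * (m + 1)) := by
  have h : (fun k : Fin (m + 2) => if k = 0 then A₁ else if k = 1 then A₂ else B) =
      fun k => B * if k = 0 then B⁻¹ * A₁ else if k = 1 then B⁻¹ * A₂ else 1 := by
    funext k
    split_ifs <;> simp [mul_nonsing_inv_cancel_left _ _ hB]
  rw [h, mixedDisc_mul_left, mixedDisc_ite_ite_one, mul_div_assoc]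

theorem mixedDisc_ite_mul_mixedDisc_ite_sub {m : ℕ}
    (A₁ A₂ B : Matrix (Fin (m + 2)) (Fin (m + 2)) ℝ) (hB : IsUnit B.det) :
    mixedDisc (fun k => if k = 0 then A₁ else B) * mixedDisc (fun k => if k = 0 then A₂ else B) -
      ((m + 1 : ℝ) / (m + 2)) *
        mixedDisc (fun k => if k = 0 then A₁ else if k = 1 then A₂ else B) * B.det =
      B.det ^ 2 * (B⁻¹ * A₁ * B⁻¹ * A₂).trace / (m + 2 : ℝ) ^ 2 := by
  have h₁ := mixedDisc_ite A₁ B hB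
  have h₂ := mixedDisc_ite A₂ B hB
  push_cast at h₁ h₂
  rw [h₁, h₂, mixedDisc_ite_ite A₁ A₂ B hB, ← Matrix.mul_assoc]
  field_simp
  ring

/-- `D(A₁,A₃[n−1]) · D(A₂,A₃[n−1]) − ((n−1)/n) · D(A₁,A₂,A₃[n−2]) · det A₃
  = det(A₃)² · tr(A₃⁻¹A₁A₃⁻¹A₂)/n² ≥ 0` (the ambient dimension is `n + 2 ≥ 2`). -/
theorem mixedDisc_sub_eq_trace {n : ℕ}
    {A₁ A₂ A₃ : Matrix (Fin (n + 2)) (Fin (n + 2)) ℝ}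
    (h₁ : A₁.PosSemidef) (h₂ : A₂.PosSemidef) (h₃ : A₃.PosDef) :
    mixedDisc (fun k => if k = 0 then A₁ else A₃) *
        mixedDisc (fun k => if k = 0 then A₂ else A₃) -
      ((n + 1 : ℝ) / (n + 2)) *
        mixedDisc (fun k => if k = 0 then A₁ else if k = 1 then A₂ else A₃) * A₃.det =
      A₃.det ^ 2 * (A₃⁻¹ * A₁ * A₃⁻¹ * A₂).trace / (n + 2 : ℝ) ^ 2 ∧
    0 ≤ mixedDisc (fun k => if k = 0 then A₁ else A₃) *
        mixedDisc (fun k => if k = 0 then A₂ else A₃) -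
      ((n + 1 : ℝ) / (n + 2)) *
        mixedDisc (fun k => if k = 0 then A₁ else if k = 1 then A₂ else A₃) * A₃.det := by
  rw [mixedDisc_ite_mul_mixedDisc_ite_sub A₁ A₂ A₃ h₃.det_pos.ne'.isUnit]
  have hA₁ : (A₃⁻¹ * A₁ * A₃⁻¹).PosSemidef := by
    have := h₁.mul_mul_conjTranspose_same A₃⁻¹
    rwa [h₃.isHermitian.inv.eq] at this
  have htrace := hA₁.trace_mul_nonneg h₂
  exact ⟨rfl, by positivity⟩
end

section
/- The mixed discriminant of positive semi-definite matrices is non-negative: if A₁,…,Aₙ are symmetric positive semi-definite real n×n matrices, then D(A₁,…,Aₙ) ≥ 0. -/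
open Equiv Finset

namespace Matrix

variable {ι m R : Type*} [Fintype ι] [DecidableEq ι] [Fintype m] [CommRing R]

theorem det_of_sum_smul (c : ι → m → R) (v : ι → m → ι → R) :
    det (of fun i => ∑ k, c i k • v i k) =
      ∑ f : ι → m, (∏ i, c i (f i)) * det (of fun i => v i (f i)) := by
  calc det (of fun i => ∑ k, c i k • v i k)
      = ∑ f : ι → m, detRowAlternating (fun i => c i (f i) • v i (f i)) :=
        detRowAlternating.map_sum _
    _ = _ := by simp only [AlternatingMap.map_smul_univ, smul_eq_mul]; rfl

theorem sum_perm_prod_mul_det_submatrix (W : Matrix ι ι R) :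
    ∑ σ : Perm ι, (∏ i, W (σ i) i) * det (W.submatrix σ id) = det W ^ 2 := by
  calc ∑ σ : Perm ι, (∏ i, W (σ i) i) * det (W.submatrix σ id)
      = (∑ σ : Perm ι, Perm.sign σ * ∏ i, W (σ i) i) * det W := by
        simp only [det_permute, sum_mul]
        exact sum_congr rfl fun σ _ => by ring
    _ = det W ^ 2 := by rw [← det_apply', sq]

theorem sum_perm_det_of_transpose_mul_self (B : ι → Matrix m ι R) :
    ∑ σ : Perm ι, det (of fun i j => ((B (σ j))ᵀ * B (σ j)) i j) =
      ∑ h : ι → m, det (of fun k => B k (h k)) ^ 2 := by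
  have expand (σ : Perm ι) : det (of fun i j => ((B (σ j))ᵀ * B (σ j)) i j) =
      ∑ h : ι → m,
        (∏ i, B (σ i) (h (σ i)) i) * det ((of fun k => B k (h k)).submatrix σ id) := by
    rw [← det_transpose]
    have rows : (of fun i j => ((B (σ j))ᵀ * B (σ j)) i j)ᵀ =
        of fun i => ∑ k, B (σ i) k i • B (σ i) k := by
      ext i j
      simp [mul_apply, Finset.sum_apply, mul_comm]
    -- reindex the row choices by `f = h ∘ σ`
    rw [rows, det_of_sum_smul (fun i k => B (σ i) k i) (fun i k => B (σ i) k),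
      ← (arrowCongr σ.symm (Equiv.refl m)).sum_comp]
    rfl
  simp only [expand]
  rw [Finset.sum_comm]
  exact sum_congr rfl fun h _ => sum_perm_prod_mul_det_submatrix (of fun k => B k (h k))

open scoped MatrixOrder ComplexOrder in
theorem PosSemidef.exists_eq_conjTranspose_mul_self {𝕜 n : Type*} [RCLike 𝕜] [Fintype n]
    {A : Matrix n n 𝕜} (hA : A.PosSemidef) : ∃ B : Matrix n n 𝕜, A = Bᴴ * B := by
  classical
  exact ⟨CFC.sqrt A, by
    rw [← star_eq_conjTranspose, (CFC.sqrt_nonneg A).isSelfAdjoint.star_eq,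
      CFC.sqrt_mul_sqrt_self A hA.nonneg]⟩

end Matrix

theorem mixedDisc_nonneg {n : ℕ}
    {A : Fin n → Matrix (Fin n) (Fin n) ℝ}
    (hA : ∀ i, (A i).PosSemidef) :
    0 ≤ mixedDisc A := by
  choose B hB using fun k => (hA k).exists_eq_conjTranspose_mul_self
  simp only [Matrix.conjTranspose_eq_transpose_of_trivial] at hB
  rw [mixedDisc]
  simp only [hB, Matrix.sum_perm_det_of_transpose_mul_self]
  positivity
end

section
/- For a convex body K ⊂ ℝⁿ and a unit vector u, the mean width integral satisfies ∫_{S^{n−1}} h_K dσ ≥ ∫_{S^{n−1}} h_{K|_u} dσ, where K|_u is the orthogonal projection of K onto the hyperplane u^⊥, h denotes the support function, and σ is the normalized Haar measure on the sphere. -/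
/-!
Let `P` be the orthogonal projection onto `u^⊥` and `R` the reflection in `u^⊥`. Since `P` is
self-adjoint, `h_{P K}(v) = h_K(P v)`, and `P v` is the midpoint of `v` and `R v`; as `h_K` is
convex, `h_{P K}(v) ≤ (h_K(v) + h_K(R v)) / 2`. Integrating over the sphere, the two terms on the
right have the same integral because `σ` is invariant under the isometry `R`.
-/

open MeasureTheory

/-- The support function `h_K(v) = sup {⟨x, v⟩ : x ∈ K}`. -/
noncomputable def suppFn {n : ℕ} (K : Set (EuclideanSpace ℝ (Fin n)))
    (v : EuclideanSpace ℝ (Fin n)) : ℝ :=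
  sSup ((fun x => inner ℝ x v : EuclideanSpace ℝ (Fin n) → ℝ) '' K)

/-- The normalized (rotation invariant, probability) measure on the unit sphere. -/
noncomputable def sphereMeasure (n : ℕ) :
    Measure (Metric.sphere (0 : EuclideanSpace ℝ (Fin n)) 1) :=
  ((volume : Measure (EuclideanSpace ℝ (Fin n))).toSphere Set.univ)⁻¹ •
    (volume : Measure (EuclideanSpace ℝ (Fin n))).toSphere

open Metric Set
open scoped Pointwise

namespace LinearIsometryEquiv

variable {E : Type*} [NormedAddCommGroup E] [NormedSpace ℝ E]

def restrictSphere (f : E ≃ₗᵢ[ℝ] E) : sphere (0 : E) 1 ≃ₜ sphere (0 : E) 1 :=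
  f.toHomeomorph.subtype fun x => by simp

@[simp]
lemma coe_restrictSphere (f : E ≃ₗᵢ[ℝ] E) (v : sphere (0 : E) 1) :
    (f.restrictSphere v : E) = f v :=
  rfl

lemma Ioo_smul_image_coe_preimage_restrictSphere (f : E ≃ₗᵢ[ℝ] E) (s : Set (sphere (0 : E) 1)) :
    Ioo (0 : ℝ) 1 • ((↑) '' (f.restrictSphere ⁻¹' s) : Set E) =
      f ⁻¹' (Ioo (0 : ℝ) 1 • ((↑) '' s)) := by
  ext x
  simp only [Set.mem_smul, Set.mem_image, Set.mem_preimage]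
  constructor
  · rintro ⟨r, hr, _, ⟨v, hv, rfl⟩, rfl⟩
    exact ⟨r, hr, _, ⟨_, hv, rfl⟩, by simp⟩
  · rintro ⟨r, hr, _, ⟨w, hw, rfl⟩, hx⟩
    refine ⟨r, hr, _, ⟨f.symm.restrictSphere w, ?_, rfl⟩, ?_⟩
    · convert hw
      ext
      simp
    · rw [coe_restrictSphere, ← map_smul, hx, f.symm_apply_apply]

variable [MeasurableSpace E] [BorelSpace E]

lemma measurePreserving_restrictSphere_toSphere {μ : Measure E} {f : E ≃ₗᵢ[ℝ] E}
    (hf : MeasurePreserving f μ μ) :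
    MeasurePreserving f.restrictSphere μ.toSphere μ.toSphere := by
  refine ⟨f.restrictSphere.measurable, ?_⟩
  ext s hs
  rw [Measure.map_apply f.restrictSphere.measurable hs,
    Measure.toSphere_apply' _ (f.restrictSphere.measurable hs), Measure.toSphere_apply' _ hs,
    Ioo_smul_image_coe_preimage_restrictSphere]
  congr 1
  exact MeasurePreserving.measure_preimage_equiv (f := f.toHomeomorph.toMeasurableEquiv) hf _

end LinearIsometryEquiv

section Symmetrization

variable {E : Type*} [NormedAddCommGroup E] [NormedSpace ℝ E] [FiniteDimensional ℝ E]
  [MeasurableSpace E] [BorelSpace E]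

theorem ConvexOn.integral_comp_midpoint_le {σ : Measure (sphere (0 : E) 1)} [IsFiniteMeasure σ]
    {φ : E → ℝ} (hφ : ConvexOn ℝ univ φ) {R : E ≃ₗᵢ[ℝ] E}
    (hR : MeasurePreserving R.restrictSphere σ σ) :
    ∫ v, φ (midpoint ℝ (v : E) (R v)) ∂σ ≤ ∫ v, φ v ∂σ := by
  have hφc : Continuous φ := continuousOn_univ.1 (hφ.continuousOn isOpen_univ)
  have hintegrable : ∀ g : sphere (0 : E) 1 → ℝ, Continuous g → Integrable g σ := fun g hg =>
    hg.integrable_of_hasCompactSupport (.of_compactSpace g)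
  have hφ_int := hintegrable (fun v => φ v) (by fun_prop)
  have hφR_int := hintegrable (fun v => φ (R v)) (by fun_prop)
  have hR_inv : ∫ v, φ (R v) ∂σ = ∫ v, φ v ∂σ :=
    hR.integral_comp R.restrictSphere.measurableEmbedding fun w => φ w
  have hmid : ∀ v : sphere (0 : E) 1,
      φ (midpoint ℝ (v : E) (R v)) ≤ (⅟2 : ℝ) * φ v + (⅟2 : ℝ) * φ (R v) := fun v => by
    rw [midpoint_eq_smul_add, smul_add]
    exact hφ.2 (mem_univ _) (mem_univ _) (by norm_num) (by norm_num) (by norm_num)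
  calc ∫ v, φ (midpoint ℝ (v : E) (R v)) ∂σ
      ≤ ∫ v, ((⅟2 : ℝ) * φ v + (⅟2 : ℝ) * φ (R v)) ∂σ :=
        integral_mono (hintegrable _ (hφc.comp (by simp only [midpoint_eq_smul_add]; fun_prop)))
          ((hφ_int.const_mul _).add (hφR_int.const_mul _)) hmid
    _ = (⅟2 : ℝ) * ∫ v, φ v ∂σ + (⅟2 : ℝ) * ∫ v, φ (R v) ∂σ := by
        rw [integral_add (hφ_int.const_mul _) (hφR_int.const_mul _), integral_const_mul,
          integral_const_mul]
    _ = ∫ v, φ v ∂σ := by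
        rw [hR_inv, ← mul_add, ← two_mul, ← mul_assoc, invOf_mul_self, one_mul]

end Symmetrization

instance (n : ℕ) : IsFiniteMeasure (sphereMeasure n) where
  measure_univ_lt_top := by
    rw [sphereMeasure, Measure.smul_apply, smul_eq_mul]
    exact (ENNReal.inv_mul_le_one _).trans_lt ENNReal.one_lt_top

lemma measurePreserving_restrictSphere_sphereMeasure {n : ℕ}
    (f : EuclideanSpace ℝ (Fin n) ≃ₗᵢ[ℝ] EuclideanSpace ℝ (Fin n)) :
    MeasurePreserving f.restrictSphere (sphereMeasure n) (sphereMeasure n) :=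
  (f.measurePreserving_restrictSphere_toSphere f.measurePreserving).smul_measure _

section SupportFunction

variable {n : ℕ} {K : Set (EuclideanSpace ℝ (Fin n))}

lemma bddAbove_inner_image (hK : Bornology.IsBounded K) (v : EuclideanSpace ℝ (Fin n)) :
    BddAbove ((fun x => inner ℝ x v : EuclideanSpace ℝ (Fin n) → ℝ) '' K) := by
  obtain ⟨C, hC⟩ := hK.exists_norm_le
  refine ⟨C * ‖v‖, ?_⟩
  rintro _ ⟨x, hx, rfl⟩
  exact (real_inner_le_norm x v).trans (by gcongr; exact hC x hx)

lemma convexOn_suppFn (hK : Bornology.IsBounded K) : ConvexOn ℝ univ (suppFn K) := by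
  rcases K.eq_empty_or_nonempty with rfl | hKne
  · have h0 : suppFn (∅ : Set (EuclideanSpace ℝ (Fin n))) = fun _ => 0 := by
      funext v
      simp [suppFn]
    exact h0 ▸ convexOn_const 0 convex_univ
  refine ⟨convex_univ, fun v _ w _ a b ha hb hab => csSup_le (hKne.image _) ?_⟩
  rintro _ ⟨x, hx, rfl⟩
  have hbdd := bddAbove_inner_image hK
  have hv : inner ℝ x v ≤ suppFn K v := le_csSup (hbdd v) ⟨x, hx, rfl⟩
  have hw : inner ℝ x w ≤ suppFn K w := le_csSup (hbdd w) ⟨x, hx, rfl⟩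
  simp only [inner_add_right, inner_smul_right, smul_eq_mul]
  gcongr

lemma suppFn_image_orthogonalProjectionOnto (W : Submodule ℝ (EuclideanSpace ℝ (Fin n)))
    [W.HasOrthogonalProjection] (v : EuclideanSpace ℝ (Fin n)) :
    suppFn ((fun x => (W.orthogonalProjectionOnto x : EuclideanSpace ℝ (Fin n))) '' K) v =
      suppFn K (W.starProjection v) := by
  simp only [suppFn, image_image, ← W.starProjection_apply,
    W.inner_starProjection_left_eq_right]

end SupportFunction

lemma Submodule.midpoint_reflection {E : Type*} [NormedAddCommGroup E] [InnerProductSpace ℝ E]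
    (W : Submodule ℝ E) [W.HasOrthogonalProjection] (v : E) :
    midpoint ℝ v (W.reflection v) = W.starProjection v := by
  rw [midpoint_eq_smul_add, W.reflection_apply, add_sub_cancel, two_smul, ← two_smul ℝ, smul_smul]
  norm_num

theorem meanWidth_proj_le_general {n : ℕ}
    {K : Set (EuclideanSpace ℝ (Fin n))}
    (hKc : IsCompact K)
    {u : EuclideanSpace ℝ (Fin n)} :
    ∫ v : Metric.sphere (0 : EuclideanSpace ℝ (Fin n)) 1,
        suppFn K (v : EuclideanSpace ℝ (Fin n)) ∂(sphereMeasure n) ≥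
      ∫ v : Metric.sphere (0 : EuclideanSpace ℝ (Fin n)) 1,
        suppFn ((fun x => (Submodule.orthogonalProjection (ℝ ∙ u)ᗮ x :
            EuclideanSpace ℝ (Fin n))) '' K) (v : EuclideanSpace ℝ (Fin n))
          ∂(sphereMeasure n) := by
  simp only [suppFn_image_orthogonalProjectionOnto, ← Submodule.midpoint_reflection]
  exact (convexOn_suppFn hKc.isBounded).integral_comp_midpoint_le
    (measurePreserving_restrictSphere_sphereMeasure _)

/-- The mean width does not increase when passing to the projection of `K`
onto the hyperplane `u^⊥`. -/
theorem meanWidth_proj_le {n : ℕ}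
    {K : Set (EuclideanSpace ℝ (Fin n))}
    (hK : Convex ℝ K) (hKc : IsCompact K) (hKne : K.Nonempty)
    {u : EuclideanSpace ℝ (Fin n)} (hu : ‖u‖ = 1) :
    ∫ v : Metric.sphere (0 : EuclideanSpace ℝ (Fin n)) 1,
        suppFn K (v : EuclideanSpace ℝ (Fin n)) ∂(sphereMeasure n) ≥
      ∫ v : Metric.sphere (0 : EuclideanSpace ℝ (Fin n)) 1,
        suppFn ((fun x => (Submodule.orthogonalProjection (ℝ ∙ u)ᗮ x :
            EuclideanSpace ℝ (Fin n))) '' K) (v : EuclideanSpace ℝ (Fin n))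
          ∂(sphereMeasure n) :=
  meanWidth_proj_le_general hKc
end
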